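/- There exist universal constants c0, c1 > 0 and C > 0 such that the following holds. Let n, N ≥ 9 be integers, m = ⌊(N+1)/10⌋, and ρ_(1) ≤ … ≤ ρ_(N+1) reals with every ρ_(t) ≥ 1. Set ε = min_{t ∈ {1,…,N+1}} (c1·N/(n·t²))^{1/(2·ρ_(t))}, let t*_p attain this minimum, and assume ε ∈ (0, 1/2), t*_p ≥ √(N/n). Suppose #{ s ∈ {1,…,m} : ρ_(s) < 2·ρ_(t*_p)·ln(n·N)/ln(n·(t*_p)²/N) } ≤ c0/(n·ε²·e^{n·ε²}). For σ ∈ {0,1}, let Π^σ be the product, over t = 1,…,N+1, of the uniform mixture over s ∈ {1,…,m} of the Binomial(n, 1/2 + (1/2)·(2σ−1)·ε^{ρ_(s)}) distributions. Then D_KL(Π^1 ‖ Π^0) ≤ C. -/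

import Mathlib

open scoped Classical

/-- The probability mass function of the Binomial(n, p) distribution at `k`. -/
noncomputable def binomPMF (n : ℕ) (p : ℝ) (k : ℕ) : ℝ :=
  (n.choose k : ℝ) * p ^ k * (1 - p) ^ (n - k)

/-- The uniform mixture, over `s ∈ {1,…,m}` with `m = ⌊(N+1)/10⌋`, of the
`Binomial(n, 1/2 + (1/2)(2σ−1)ε^{ρ_(s)})` laws, evaluated at a count `k`;
the index `s ∈ {1,…,m}` is encoded as `s : Fin (N+1)` with `(s : ℕ) < m`. -/
noncomputable def mixBinom (n N : ℕ) (ε : ℝ) (ρ : Fin (N+1) → ℝ) (σ : Bool)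
    (k : ℕ) : ℝ :=
  ((((N+1)/10 : ℕ) : ℝ))⁻¹ *
    ∑ s ∈ Finset.univ.filter (fun s : Fin (N+1) => (s : ℕ) < (N+1)/10),
      binomPMF n (1/2 + (1/2) * (if σ then (1:ℝ) else -1) * ε ^ (ρ s)) k

open Real Finset

/-!
The two joint laws are products of `N + 1` identical marginals, so the divergence tensorizes
to `N + 1` times the divergence of one task. By the log-sum inequality (joint convexity of the
divergence), the divergence between the two mixtures is at most the average over `s` of
`KL(Bin(n, (1 + x)/2) ‖ Bin(n, (1 - x)/2)) = n x log ((1 + x)/(1 - x)) ≤ 4 n x²`,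
`x = ε^{ρ_s}`. Indices with `ρ_s` below the threshold are few by assumption and contribute at
most `4 n ε²` each; above it `ε^{ρ_s} ≤ 1/(nN)`, because with `c1 = 1/4` the minimiser `t*_p`
gives `2 ρ_(t*_p) log ε = -log 4 - log (n (t*_p)² / N)`. As `m ≥ (N + 1)/20`, the total is at
most `20 · 8`.
-/
lemma binomPMF_eq_eval_bernsteinPolynomial (n k : ℕ) (p : ℝ) :
    binomPMF n p k = (bernsteinPolynomial ℝ n k).eval p := by
  simp [binomPMF, bernsteinPolynomial]

lemma sum_binomPMF (n : ℕ) (p : ℝ) : ∑ k ∈ range (n + 1), binomPMF n p k = 1 := by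
  simp_rw [binomPMF_eq_eval_bernsteinPolynomial, ← Polynomial.eval_finsetSum,
    bernsteinPolynomial.sum, Polynomial.eval_one]

lemma sum_mul_binomPMF (n : ℕ) (p : ℝ) :
    ∑ k ∈ range (n + 1), (k : ℝ) * binomPMF n p k = n * p := by
  have h := congrArg (Polynomial.eval p) (bernsteinPolynomial.sum_smul (R := ℝ) n)
  simpa [Polynomial.eval_finsetSum, binomPMF_eq_eval_bernsteinPolynomial] using h

lemma binomPMF_pos {n k : ℕ} {p : ℝ} (hk : k ≤ n) (h0 : 0 < p) (h1 : p < 1) :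
    0 < binomPMF n p k := by
  have : 0 < 1 - p := by linarith
  unfold binomPMF
  positivity [Nat.choose_pos hk]

section KullbackLeibler

variable {α ι : Type*}

noncomputable def discreteKL [Fintype α] (p q : α → ℝ) : ℝ :=
  ∑ a, p a * log (p a / q a)

lemma sum_mul_log_div_sum_le (s : Finset ι) (a b : ι → ℝ)
    (ha : ∀ i ∈ s, 0 ≤ a i) (hb : ∀ i ∈ s, 0 < b i) :
    (∑ i ∈ s, a i) * log ((∑ i ∈ s, a i) / ∑ i ∈ s, b i)
      ≤ ∑ i ∈ s, a i * log (a i / b i) := by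
  rcases s.eq_empty_or_nonempty with rfl | hs
  · simp
  have hB : 0 < ∑ i ∈ s, b i := sum_pos hb hs
  have jensen := convexOn_mul_log.map_sum_le (t := s) (w := fun i => b i / ∑ j ∈ s, b j)
    (p := fun i => a i / b i) (fun i hi => (div_pos (hb i hi) hB).le)
    (by rw [← sum_div, div_self hB.ne'])
    (fun i hi => Set.mem_Ici.mpr (div_nonneg (ha i hi) (hb i hi).le))
  have hmean :
      ∑ i ∈ s, (b i / ∑ j ∈ s, b j) • (a i / b i) = (∑ i ∈ s, a i) / ∑ i ∈ s, b i := by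
    rw [sum_div]
    exact sum_congr rfl fun i hi => by
      have := (hb i hi).ne'
      simp only [smul_eq_mul]; field_simp
  rw [hmean] at jensen
  have hterm : ∀ i ∈ s, (b i / ∑ j ∈ s, b j) • (a i / b i * log (a i / b i))
      = a i * log (a i / b i) / ∑ j ∈ s, b j := fun i hi => by
    have := (hb i hi).ne'
    simp only [smul_eq_mul]; field_simp
  rwa [sum_congr rfl hterm, ← sum_div, div_mul_eq_mul_div,
    div_le_div_iff_of_pos_right hB] at jensen

lemma discreteKL_smul_sum_le [Fintype α] (c : ℝ) (hc : 0 < c) (s : Finset ι)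
    (P Q : ι → α → ℝ) (hP : ∀ i ∈ s, ∀ a, 0 ≤ P i a) (hQ : ∀ i ∈ s, ∀ a, 0 < Q i a) :
    discreteKL (fun a => c * ∑ i ∈ s, P i a) (fun a => c * ∑ i ∈ s, Q i a)
      ≤ c * ∑ i ∈ s, discreteKL (P i) (Q i) := by
  unfold discreteKL
  rw [sum_comm, mul_sum]
  refine sum_le_sum fun a _ => ?_
  rw [mul_div_mul_left _ _ hc.ne', mul_assoc]
  exact mul_le_mul_of_nonneg_left
    (sum_mul_log_div_sum_le s _ _ (fun i hi => hP i hi a) (fun i hi => hQ i hi a)) hc.le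

lemma sum_prod_mul_apply [Fintype α] [Fintype ι] [DecidableEq ι] (f h : α → ℝ)
    (hf : ∑ a, f a = 1) (i : ι) :
    ∑ k : ι → α, (∏ j, f (k j)) * h (k i) = ∑ a, f a * h a := by
  obtain ⟨F, hFi, hFne⟩ : ∃ F : ι → α → ℝ,
      F i = (fun a => f a * h a) ∧ ∀ j ∈ ({i}ᶜ : Finset ι), F j = f :=
    ⟨Function.update _ i _, Function.update_self .., fun j hj =>
      Function.update_of_ne (by simpa using hj) ..⟩
  have hF : ∀ k : ι → α, ∏ j, F j (k j) = (∏ j, f (k j)) * h (k i) := fun k => by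
    rw [Fintype.prod_eq_mul_prod_compl i, Fintype.prod_eq_mul_prod_compl i (fun j => f (k j)),
      prod_congr rfl fun j hj => congrFun (hFne j hj) (k j), hFi]
    ring
  rw [← sum_congr rfl fun k _ => hF k, ← Fintype.prod_sum, Fintype.prod_eq_mul_prod_compl i,
    prod_congr rfl fun j hj => by rw [hFne j hj, hf], hFi]
  simp

lemma discreteKL_pi [Fintype α] [Fintype ι] [DecidableEq ι] (p q : α → ℝ)
    (hp : ∀ a, 0 < p a) (hq : ∀ a, 0 < q a) (hp1 : ∑ a, p a = 1) :
    discreteKL (fun k : ι → α => ∏ i, p (k i)) (fun k => ∏ i, q (k i))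
      = Fintype.card ι * discreteKL p q := by
  have hlog (k : ι → α) :
      log ((∏ i, p (k i)) / ∏ i, q (k i)) = ∑ i, log (p (k i) / q (k i)) := by
    rw [← prod_div_distrib, log_prod fun i _ => (div_pos (hp _) (hq _)).ne']
  calc discreteKL (fun k : ι → α => ∏ i, p (k i)) (fun k => ∏ i, q (k i))
      = ∑ k : ι → α, ∑ i, (∏ j, p (k j)) * log (p (k i) / q (k i)) :=
        sum_congr rfl fun k _ => by rw [hlog, mul_sum]
    _ = ∑ i : ι, discreteKL p q := by
        rw [sum_comm]
        exact sum_congr rfl fun i _ => sum_prod_mul_apply p (fun a => log (p a / q a)) hp1 i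
    _ = Fintype.card ι * discreteKL p q := by simp

end KullbackLeibler

lemma log_binomPMF_div {n k : ℕ} {p q : ℝ} (hk : k ≤ n) (hp0 : 0 < p) (hp1 : p < 1)
    (hq0 : 0 < q) (hq1 : q < 1) :
    log (binomPMF n p k / binomPMF n q k)
      = k * log (p / q) + (n - k) * log ((1 - p) / (1 - q)) := by
  have h1p : 0 < 1 - p := by linarith
  have h1q : 0 < 1 - q := by linarith
  have hratio : binomPMF n p k / binomPMF n q k = (p / q) ^ k * ((1 - p) / (1 - q)) ^ (n - k) := by
    have : (n.choose k : ℝ) ≠ 0 := by exact_mod_cast (Nat.choose_pos hk).ne'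
    unfold binomPMF
    rw [div_pow, div_pow]
    field_simp
  rw [hratio, log_mul (by positivity) (by positivity), log_pow, log_pow, Nat.cast_sub hk]

lemma discreteKL_binomPMF {n : ℕ} {p q : ℝ} (hp0 : 0 < p) (hp1 : p < 1) (hq0 : 0 < q)
    (hq1 : q < 1) :
    discreteKL (fun k : Fin (n + 1) => binomPMF n p k) (fun k => binomPMF n q k)
      = n * (p * log (p / q) + (1 - p) * log ((1 - p) / (1 - q))) := by
  set A := log (p / q)
  set B := log ((1 - p) / (1 - q))
  unfold discreteKL
  rw [Fin.sum_univ_eq_sum_range (fun k => binomPMF n p k * log (binomPMF n p k / binomPMF n q k))]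
  calc ∑ k ∈ range (n + 1), binomPMF n p k * log (binomPMF n p k / binomPMF n q k)
      = ∑ k ∈ range (n + 1), ((A - B) * (k * binomPMF n p k) + n * B * binomPMF n p k) :=
        sum_congr rfl fun k hk => by
          rw [log_binomPMF_div (Nat.lt_succ_iff.mp (mem_range.mp hk)) hp0 hp1 hq0 hq1]
          ring
    _ = n * (p * A + (1 - p) * B) := by
        rw [sum_add_distrib, ← mul_sum, ← mul_sum, sum_mul_binomPMF, sum_binomPMF]
        ring

lemma discreteKL_binomPMF_half_add_le (n : ℕ) {x : ℝ} (hx0 : 0 ≤ x) (hx : x ≤ 1 / 2) :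
    discreteKL (fun k : Fin (n + 1) => binomPMF n (1 / 2 + x / 2) k)
        (fun k => binomPMF n (1 / 2 - x / 2) k) ≤ 4 * n * x ^ 2 := by
  have hlog : log ((1 / 2 + x / 2) / (1 / 2 - x / 2)) ≤ 4 * x := by
    have hq : 1 / 4 ≤ 1 / 2 - x / 2 := by linarith
    refine (log_le_sub_one_of_pos (by positivity)).trans ?_
    rw [div_sub_one (by positivity), div_le_iff₀ (by positivity)]
    nlinarith
  have hsymm : log ((1 / 2 - x / 2) / (1 / 2 + x / 2))
      = -log ((1 / 2 + x / 2) / (1 / 2 - x / 2)) := by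
    rw [← log_inv, inv_div]
  rw [discreteKL_binomPMF (by linarith) (by linarith) (by linarith) (by linarith),
    show 1 - (1 / 2 + x / 2) = 1 / 2 - x / 2 by ring,
    show 1 - (1 / 2 - x / 2) = 1 / 2 + x / 2 by ring,
    hsymm]
  calc (n : ℝ) * ((1 / 2 + x / 2) * log ((1 / 2 + x / 2) / (1 / 2 - x / 2))
        + (1 / 2 - x / 2) * -log ((1 / 2 + x / 2) / (1 / 2 - x / 2)))
      = n * x * log ((1 / 2 + x / 2) / (1 / 2 - x / 2)) := by ring
    _ ≤ n * x * (4 * x) := by gcongr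
    _ = 4 * n * x ^ 2 := by ring

section Mixture

lemma binomPMF_half_add_sign_mul_pos {n k : ℕ} (hk : k ≤ n) (σ : Bool) {x : ℝ} (hx0 : 0 ≤ x)
    (hx1 : x < 1) : 0 < binomPMF n (1 / 2 + (1 / 2) * (if σ then (1 : ℝ) else -1) * x) k := by
  refine binomPMF_pos hk ?_ ?_ <;> cases σ <;> norm_num <;> linarith

variable {n N : ℕ} {ε : ℝ} {ρ : Fin (N + 1) → ℝ}

lemma mixBinom_pos (hε : 0 ≤ ε) (hρ : ∀ s, ε ^ ρ s < 1) (hN : 9 ≤ N) (σ : Bool) {k : ℕ}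
    (hk : k ≤ n) : 0 < mixBinom n N ε ρ σ k := by
  have hm : 0 < (N + 1) / 10 := by omega
  exact mul_pos (by positivity) (sum_pos (fun s _ =>
    binomPMF_half_add_sign_mul_pos hk σ (rpow_nonneg hε _) (hρ s)) ⟨0, by simpa⟩)

lemma sum_mixBinom (hN : 9 ≤ N) (σ : Bool) :
    ∑ k : Fin (n + 1), mixBinom n N ε ρ σ k = 1 := by
  have hm : (0 : ℝ) < ((N + 1) / 10 : ℕ) := by exact_mod_cast (by omega : 0 < (N + 1) / 10)
  unfold mixBinom
  rw [← mul_sum, sum_comm, sum_congr rfl fun s _ =>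
    (Fin.sum_univ_eq_sum_range (binomPMF n _) (n + 1)).trans (sum_binomPMF n _)]
  rw [sum_const, Fin.card_filter_val_lt, min_eq_right (by omega), nsmul_one,
    inv_mul_cancel₀ hm.ne']

lemma discreteKL_mixBinom_le (hε : 0 ≤ ε) (hρ : ∀ s, ε ^ ρ s ≤ 1 / 2) (hN : 9 ≤ N) :
    discreteKL (fun k : Fin (n + 1) => mixBinom n N ε ρ true k)
        (fun k => mixBinom n N ε ρ false k)
      ≤ (((N + 1) / 10 : ℕ) : ℝ)⁻¹ *
          ∑ s ∈ univ.filter (fun s : Fin (N + 1) => (s : ℕ) < (N + 1) / 10),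
            4 * n * (ε ^ ρ s) ^ 2 := by
  have hm : (0 : ℝ) < ((N + 1) / 10 : ℕ) := by exact_mod_cast (by omega : 0 < (N + 1) / 10)
  have hpos : ∀ (σ : Bool) s (k : Fin (n + 1)),
      0 < binomPMF n (1 / 2 + (1 / 2) * (if σ then (1 : ℝ) else -1) * ε ^ ρ s) k :=
    fun σ s k => binomPMF_half_add_sign_mul_pos (Nat.lt_succ_iff.mp k.isLt) σ (rpow_nonneg hε _)
      (by linarith [hρ s])
  refine (discreteKL_smul_sum_le _ (inv_pos.mpr hm) _ _ _ (fun s _ k => (hpos true s k).le)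
    (fun s _ k => hpos false s k)).trans
    (mul_le_mul_of_nonneg_left (sum_le_sum fun s _ => ?_) (inv_pos.mpr hm).le)
  have h := discreteKL_binomPMF_half_add_le n (rpow_nonneg hε (ρ s)) (hρ s)
  have hp : 1 / 2 + (1 / 2) * (if true then (1 : ℝ) else -1) * ε ^ ρ s
      = 1 / 2 + ε ^ ρ s / 2 := by
    norm_num; ring
  have hq : 1 / 2 + (1 / 2) * (if false then (1 : ℝ) else -1) * ε ^ ρ s
      = 1 / 2 - ε ^ ρ s / 2 := by
    norm_num; ring
  rwa [hp, hq]

end Mixture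

lemma rpow_le_inv_of_mul_log_le {ε a L X r : ℝ} (hε0 : 0 < ε) (hε1 : ε ≤ 1) (hX : 1 ≤ X)
    (hL : 0 < L) (ha : a * log ε ≤ -L) (hr : a * log X / L ≤ r) : ε ^ r ≤ X⁻¹ := by
  have hexp : a * log ε / L ≤ -1 := by rw [div_le_iff₀ hL]; linarith
  calc ε ^ r ≤ ε ^ (a * log X / L) := rpow_le_rpow_of_exponent_ge hε0 hε1 hr
    _ = exp (log X * (a * log ε / L)) := by rw [rpow_def_of_pos hε0]; ring_nf
    _ ≤ exp (log X * -1) := by gcongr; exact log_nonneg hX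
    _ = X⁻¹ := by rw [mul_neg_one, exp_neg, exp_log (by linarith)]

lemma rpow_le_inv_of_threshold_le {n N : ℕ} {d a ε r : ℝ} (hn : 1 ≤ n) (hN : 1 ≤ N)
    (hd : 0 < d) (ha : 1 ≤ a) (hε : ε = (1 / 4 * N / (n * d)) ^ (1 / (2 * a))) (hε12 : ε < 1 / 2)
    (hr : 2 * a * log (n * N) / log (n * d / N) ≤ r) : ε ^ r ≤ ((n : ℝ) * N)⁻¹ := by
  have hn' : (1 : ℝ) ≤ n := by exact_mod_cast hn
  have hN' : (1 : ℝ) ≤ N := by exact_mod_cast hN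
  have hε0 : 0 < ε := hε ▸ rpow_pos_of_pos (by positivity) _
  have hlogε : 2 * a * log ε = -(log 4 + log (n * d / N)) := by
    have hB : 1 / 4 * N / (n * d) = (4 * (n * d / N))⁻¹ := by field_simp
    rw [hε, log_rpow (by positivity), hB, log_inv, log_mul (by norm_num) (by positivity)]
    field_simp
  have hlog4 : log 4 = -2 * log (1 / 2) := by
    rw [show (4 : ℝ) = (1 / 2) ^ (-2 : ℤ) by norm_num, log_zpow]; norm_num
  have hlogε_neg : log ε < log (1 / 2) := log_lt_log hε0 hε12
  have hlog_half : log (1 / 2 : ℝ) < 0 := log_neg (by norm_num) (by norm_num)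
  have hL : 0 < log (n * d / N) := by nlinarith
  exact rpow_le_inv_of_mul_log_le hε0 (by linarith) (by nlinarith) hL (by linarith) hr

lemma sum_sq_rpow_le_of_threshold {ι : Type*} (S : Finset ι) (ρ : ι → ℝ) {ε T η : ℝ}
    (hε0 : 0 ≤ ε) (hε1 : ε ≤ 1) (hρ : ∀ s ∈ S, 1 ≤ ρ s)
    (hT : ∀ s ∈ S, T ≤ ρ s → ε ^ ρ s ≤ η) :
    ∑ s ∈ S, (ε ^ ρ s) ^ 2 ≤ #(S.filter (fun s => ρ s < T)) * ε ^ 2 + #S * η ^ 2 := by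
  rw [← sum_filter_add_sum_filter_not S (fun s => ρ s < T)]
  gcongr
  · refine (sum_le_card_nsmul _ _ _ fun s hs => ?_).trans_eq (nsmul_eq_mul _ _)
    have hs' := (mem_filter.mp hs).1
    exact pow_le_pow_left₀ (rpow_nonneg hε0 _)
      (by simpa using rpow_le_rpow_of_exponent_ge' hε0 hε1 zero_le_one (hρ s hs')) 2
  · refine (sum_le_card_nsmul _ _ (η ^ 2) fun s hs => ?_).trans ?_
    · obtain ⟨hsS, hsT⟩ := mem_filter.mp hs
      exact pow_le_pow_left₀ (rpow_nonneg hε0 _) (hT s hsS (not_lt.mp hsT)) 2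
    · rw [nsmul_eq_mul]
      exact mul_le_mul_of_nonneg_right (by exact_mod_cast card_filter_le _ _) (sq_nonneg η)

lemma four_mul_sum_sq_rpow_le {ι : Type*} (S : Finset ι) (ρ : ι → ℝ) {n N : ℕ} {ε T : ℝ}
    (hn : 1 ≤ n) (hN : 1 ≤ N) (hS : #S ≤ N) (hε0 : 0 < ε) (hε1 : ε ≤ 1)
    (hρ : ∀ s ∈ S, 1 ≤ ρ s) (hT : ∀ s ∈ S, T ≤ ρ s → ε ^ ρ s ≤ ((n : ℝ) * N)⁻¹)
    (hcard : (#(S.filter (fun s => ρ s < T)) : ℝ) ≤ 1 / (n * ε ^ 2 * exp (n * ε ^ 2))) :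
    4 * n * ∑ s ∈ S, (ε ^ ρ s) ^ 2 ≤ 8 := by
  have hsmall : (#(S.filter (fun s => ρ s < T)) : ℝ) * (n * ε ^ 2) ≤ 1 := by
    rw [← le_div_iff₀ (by positivity)]
    refine hcard.trans (div_le_div_of_nonneg_left zero_le_one (by positivity) ?_)
    exact le_mul_of_one_le_right (by positivity) (one_le_exp (by positivity))
  have hlarge : (#S : ℝ) / (n * N ^ 2) ≤ 1 :=
    div_le_one_of_le₀ (by exact_mod_cast (by nlinarith : #S ≤ n * N ^ 2)) (by positivity)
  calc 4 * n * ∑ s ∈ S, (ε ^ ρ s) ^ 2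
      ≤ 4 * n * (#(S.filter (fun s => ρ s < T)) * ε ^ 2 + #S * ((n : ℝ) * N)⁻¹ ^ 2) := by
        gcongr
        exact sum_sq_rpow_le_of_threshold S ρ hε0.le hε1 hρ hT
    _ = 4 * (#(S.filter (fun s => ρ s < T)) * (n * ε ^ 2)) + 4 * (#S / (n * N ^ 2)) := by
        field_simp
    _ ≤ 8 := by linarith

/-- the KL-divergence bound from the proof of the Appendix D
theorem of the paper.  There are universal constants `c0, c1, C > 0` such that,
with `ε = min_t (c1·N/(n·t²))^{1/(2ρ_(t))}` attained at `t*_p`, `ε ∈ (0,1/2)`,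
`t*_p ≥ √(N/n)`, and at most `c0/(n·ε²·e^{n·ε²})` of the indices `s ∈ {1,…,m}`
having `ρ_(s)` below the threshold `2ρ_(t*_p)·ln(nN)/ln(n·(t*_p)²/N)`, the KL
divergence between the two joint laws `Π^1, Π^0` (products over the `N+1` tasks
of the uniform mixture over `s ∈ {1,…,m}` of `Binomial(n, 1/2 ± ε^{ρ_(s)}/2)`)
is at most `C`. -/
theorem stmt18 :
    ∃ c0 c1 C : ℝ, 0 < c0 ∧ 0 < c1 ∧ 0 < C ∧
      ∀ n N : ℕ, 9 ≤ n → 9 ≤ N →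
      ∀ ρ : Fin (N+1) → ℝ, Monotone ρ → (∀ t, 1 ≤ ρ t) →
      ∀ tp : Fin (N+1), ∀ ε : ℝ,
        ε = (c1 * (N : ℝ) / ((n : ℝ) * (((tp : ℕ) : ℝ) + 1)^2)) ^ (1 / (2 * ρ tp)) →
        (∀ t : Fin (N+1),
          ε ≤ (c1 * (N : ℝ) / ((n : ℝ) * (((t : ℕ) : ℝ) + 1)^2)) ^ (1 / (2 * ρ t))) →
        0 < ε → ε < 1/2 →
        Real.sqrt ((N : ℝ) / (n : ℝ)) ≤ ((tp : ℕ) : ℝ) + 1 →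
        ((Finset.univ.filter (fun s : Fin (N+1) => (s : ℕ) < (N+1)/10 ∧
              ρ s < 2 * ρ tp * Real.log ((n : ℝ) * (N : ℝ)) /
                Real.log ((n : ℝ) * (((tp : ℕ) : ℝ) + 1)^2 / (N : ℝ)))).card : ℝ)
          ≤ c0 / ((n : ℝ) * ε^2 * Real.exp ((n : ℝ) * ε^2)) →
        ∑ k : Fin (N+1) → Fin (n+1),
            (∏ t, mixBinom n N ε ρ true (k t)) *
              Real.log ((∏ t, mixBinom n N ε ρ true (k t)) /
                (∏ t, mixBinom n N ε ρ false (k t)))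
          ≤ C := by
  refine ⟨1, 1 / 4, 160, by norm_num, by norm_num, by norm_num, ?_⟩
  intro n N hn hN ρ _ hρ tp ε hε _ hε0 hε12 _ hcard
  set m := (N + 1) / 10
  set S := univ.filter (fun s : Fin (N + 1) => (s : ℕ) < m)
  have hle : ∀ s, ε ^ ρ s ≤ ε := fun s => by
    simpa using rpow_le_rpow_of_exponent_ge hε0 (by linarith) (hρ s)
  have hpos (σ : Bool) (k : Fin (n + 1)) : 0 < mixBinom n N ε ρ σ k :=
    mixBinom_pos hε0.le (fun s => by linarith [hle s]) hN σ (Nat.lt_succ_iff.mp k.isLt)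
  have htensor := discreteKL_pi (ι := Fin (N + 1)) _ _ (hpos true) (hpos false)
    (sum_mixBinom hN true)
  rw [Fintype.card_fin, Nat.cast_add_one] at htensor
  unfold discreteKL at htensor
  have hsum : 4 * n * ∑ s ∈ S, (ε ^ ρ s) ^ 2 ≤ 8 :=
    four_mul_sum_sq_rpow_le S ρ (by omega) (by omega)
      (by simpa [S, Fin.card_filter_val_lt] using (by omega : m ≤ N)) hε0 (by linarith)
      (fun s _ => hρ s)
      (fun s _ hs => rpow_le_inv_of_threshold_le (by omega) (by omega) (by positivity) (hρ tp)
        hε hε12 hs)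
      (by rwa [filter_filter])
  have hm : (N + 1 : ℝ) ≤ 20 * m := by exact_mod_cast (by omega : N + 1 ≤ 20 * m)
  calc _ = (N + 1 : ℝ) * discreteKL (fun k : Fin (n + 1) => mixBinom n N ε ρ true k)
        (fun k => mixBinom n N ε ρ false k) := htensor
    _ ≤ (N + 1) * ((m : ℝ)⁻¹ * ∑ s ∈ S, 4 * n * (ε ^ ρ s) ^ 2) := by
        gcongr
        exact discreteKL_mixBinom_le hε0.le (fun s => (hle s).trans hε12.le) hN
    _ = (N + 1) / m * (4 * n * ∑ s ∈ S, (ε ^ ρ s) ^ 2) := by rw [← mul_sum]; ring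
    _ ≤ 20 * 8 := by gcongr; rw [div_le_iff₀ (by norm_cast; omega)]; linarith
    _ = 160 := by norm_num
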